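/- Let 0 < q < 1, s ∈ ℝ and n ≥ 1. Then D_q H_n(x,s|q^{-1}) = {n}_q·H_{n-1}(x, s q^{-2}|q^{-1}) as polynomials in x, where D_q is the q-derivative (with parameter q, not q^{-1}). -/

import Mathlib

/-- The q-number `{n}_q = 1 + q + ⋯ + q^{n-1}`. -/
noncomputable def qNum (q : ℝ) (n : ℕ) : ℝ := ∑ k ∈ Finset.range n, q ^ k

/-- The q-factorial `{n}_q! = Π_{k=1}^n {k}_q`. -/
noncomputable def qFact (q : ℝ) (n : ℕ) : ℝ := ∏ k ∈ Finset.range n, qNum q (k + 1)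

/-- The even q-double factorial `{2k}_q!! = Π_{l=1}^k {2l}_q`. -/
noncomputable def qDoubleFact (q : ℝ) (k : ℕ) : ℝ := ∏ l ∈ Finset.range k, qNum q (2 * (l + 1))

/-- The coefficient `c_{n,k}(q) = (-1)^k q^{k(k-1)} {n}_q!/({n-2k}_q!·{2k}_q!!)`. -/
noncomputable def qHermiteCoeff (q : ℝ) (n k : ℕ) : ℝ :=
  (-1 : ℝ) ^ k * q ^ (k * (k - 1)) * qFact q n / (qFact q (n - 2 * k) * qDoubleFact q k)

/-- The `q⁻¹`-Hermite polynomial `H_n(x,s|q⁻¹) = Σ_{k=0}^{⌊n/2⌋} c_{n,k}(q⁻¹) s^k x^{n-2k}`. -/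
noncomputable def qInvHermite (q s : ℝ) (n : ℕ) : Polynomial ℝ :=
  ∑ k ∈ Finset.range (n / 2 + 1),
    Polynomial.C (qHermiteCoeff (1 / q) n k * s ^ k) * Polynomial.X ^ (n - 2 * k)

/-- The q-derivative on polynomials: it sends `x^j` to `{j}_q x^{j-1}`. -/
noncomputable def qDeriv (q : ℝ) (f : Polynomial ℝ) : Polynomial ℝ :=
  f.sum fun j a => Polynomial.C (a * qNum q j) * Polynomial.X ^ (j - 1)

/-! Since `D_q x^m = {m}_q x^{m-1}`, the theorem reduces to the coefficient identity
`c_{n+1,k}(p) {n+1-2k}_p = {n+1}_p c_{n,k}(p)`, valid for every `p`. Passing from `p = q⁻¹` to `q`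
through `{m+1}_{q⁻¹} = q^{-m} {m+1}_q` leaves the factor `q^{-2k}`, which is absorbed by `s ↦ s q^{-2}`.
When `n + 1` is even, the constant term of `H_{n+1}` has no counterpart in `H_n`; `D_q` kills it. -/

open Polynomial

lemma qNum_zero (q : ℝ) : qNum q 0 = 0 := Finset.sum_range_zero _

lemma qNum_succ_pos {q : ℝ} (hq : 0 < q) (m : ℕ) : 0 < qNum q (m + 1) :=
  Finset.sum_pos (fun i _ => pow_pos hq i) Finset.nonempty_range_add_one

lemma pow_mul_qNum_inv {q : ℝ} (hq : q ≠ 0) (m : ℕ) :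
    q ^ m * qNum q⁻¹ (m + 1) = qNum q (m + 1) := by
  rw [qNum, Finset.mul_sum, qNum, ← Finset.sum_range_reflect]
  refine Finset.sum_congr rfl fun i hi => ?_
  rw [Finset.mem_range] at hi
  rw [inv_pow, ← div_eq_mul_inv, div_eq_iff (pow_ne_zero _ hq), ← pow_add]
  congr 1
  omega

lemma qFact_succ (q : ℝ) (m : ℕ) : qFact q (m + 1) = qFact q m * qNum q (m + 1) :=
  Finset.prod_range_succ _ _

lemma qHermiteCoeff_succ_mul_qNum {p : ℝ} {n k : ℕ} (hk : 2 * k ≤ n)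
    (hp : qNum p (n - 2 * k + 1) ≠ 0) :
    qHermiteCoeff p (n + 1) k * qNum p (n - 2 * k + 1) = qNum p (n + 1) * qHermiteCoeff p n k := by
  rw [qHermiteCoeff, qHermiteCoeff, Nat.sub_add_comm hk, qFact_succ, qFact_succ]
  field_simp

lemma qHermiteCoeff_inv_succ_mul_qNum {q : ℝ} (hq : 0 < q) {n k : ℕ} (hk : 2 * k ≤ n) :
    qHermiteCoeff (1 / q) (n + 1) k * qNum q (n - 2 * k + 1) =
      qNum q (n + 1) * qHermiteCoeff (1 / q) n k * (q ^ (-2 : ℤ)) ^ k := by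
  have hrec := qHermiteCoeff_succ_mul_qNum hk (qNum_succ_pos (one_div_pos.2 hq) _).ne'
  obtain ⟨j, rfl⟩ : ∃ j, n = j + 2 * k := ⟨n - 2 * k, by omega⟩
  rw [← pow_mul_qNum_inv hq.ne', ← pow_mul_qNum_inv hq.ne', ← one_div]
  rw [Nat.add_sub_cancel] at hrec ⊢
  calc _ = q ^ j * (qHermiteCoeff (1 / q) (j + 2 * k + 1) k * qNum (1 / q) (j + 1)) := by ring
    _ = q ^ j * (qNum (1 / q) (j + 2 * k + 1) * qHermiteCoeff (1 / q) (j + 2 * k) k) := by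
      rw [hrec]
    _ = _ := by
      rw [zpow_neg, zpow_ofNat, inv_pow, pow_add, pow_mul]
      field_simp

lemma qDeriv_C_mul_X_pow (q c : ℝ) (m : ℕ) :
    qDeriv q (C c * X ^ m) = C (c * qNum q m) * X ^ (m - 1) := by
  rw [qDeriv, C_mul_X_pow_eq_monomial, sum_monomial_index]
  simp

lemma qDeriv_add (q : ℝ) (f g : ℝ[X]) : qDeriv q (f + g) = qDeriv q f + qDeriv q g :=
  sum_add_index _ _ _ (by simp) fun _ _ _ => by simp [add_mul]

lemma qDeriv_sum {ι : Type*} (q : ℝ) (s : Finset ι) (f : ι → ℝ[X]) :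
    qDeriv q (∑ i ∈ s, f i) = ∑ i ∈ s, qDeriv q (f i) := by
  induction s using Finset.cons_induction with
  | empty => simp [qDeriv]
  | cons i s hi ih => rw [Finset.sum_cons, Finset.sum_cons, qDeriv_add, ih]

theorem qDeriv_qInvHermite_general (q : ℝ) (hq0 : 0 < q) (s : ℝ) (n : ℕ) :
    qDeriv q (qInvHermite q s n) =
      Polynomial.C (qNum q n) * qInvHermite q (s * q ^ (-2 : ℤ)) (n - 1) := by
  rcases n with _ | n
  · rw [qInvHermite, Nat.zero_div, zero_add, Finset.sum_range_one, qDeriv_C_mul_X_pow]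
    simp [qNum_zero]
  rw [qInvHermite, qInvHermite, qDeriv_sum, Finset.mul_sum]
  simp only [qDeriv_C_mul_X_pow, Nat.add_sub_cancel]
  have htop : ∀ k ∈ Finset.range ((n + 1) / 2 + 1), k ∉ Finset.range (n / 2 + 1) →
      C (qHermiteCoeff (1 / q) (n + 1) k * s ^ k * qNum q (n + 1 - 2 * k)) *
        X ^ (n + 1 - 2 * k - 1) = 0 := by
    intro k hk hk'
    simp only [Finset.mem_range] at hk hk'
    rw [show n + 1 - 2 * k = 0 by omega, qNum_zero]
    simp
  rw [← Finset.sum_subset (Finset.range_subset_range.2 (by omega)) htop]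
  refine Finset.sum_congr rfl fun k hk => ?_
  have hk : 2 * k ≤ n := by rw [Finset.mem_range] at hk; omega
  rw [← mul_assoc, ← C_mul, show n + 1 - 2 * k = n - 2 * k + 1 by omega, Nat.add_sub_cancel]
  congr 2
  rw [mul_pow]
  linear_combination s ^ k * qHermiteCoeff_inv_succ_mul_qNum hq0 hk

/-- `D_q H_n(x,s|q⁻¹) = {n}_q·H_{n-1}(x,sq⁻²|q⁻¹)`. -/
theorem qDeriv_qInvHermite (q : ℝ) (hq0 : 0 < q) (hq1 : q < 1) (s : ℝ) (n : ℕ) (hn : 1 ≤ n) :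
    qDeriv q (qInvHermite q s n) =
      Polynomial.C (qNum q n) * qInvHermite q (s * q ^ (-2 : ℤ)) (n - 1) :=
  qDeriv_qInvHermite_general q hq0 s n
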